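/- arXiv:2401.12093 — 3 statements merged into one kernel-verified Lean document; each statement's English description precedes it below -/
import Mathlib

section
/- The step operation guarantees progress: step is a total function on monitoring trees, and after the first k invocations, each subsequent invocation of step makes exactly one transaction permanent (i.e., appends exactly one element to the history sequence). -/
/-- Rooted trees where every internal node has one or two children. -/
inductive MTree (α : Type) where
  | leaf (a : α)
  | one (a : α) (t : MTree α)
  | two (a : α) (l r : MTree α)

namespace MTree

def rootLabel : MTree α → α
  | leaf a => a
  | one a _ => a
  | two a _ _ => a

def height : MTree α → ℕ
  | leaf _ => 0
  | one _ t => t.height + 1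
  | two _ l r => max l.height r.height + 1

def rootChildren : MTree α → List (MTree α)
  | leaf _ => []
  | one _ t => [t]
  | two _ l r => [l, r]

/-- One-level extension: attach one or two new children to every leaf. -/
inductive Extends : MTree α → MTree α → Prop
  | leaf1 (a b : α) : Extends (.leaf a) (.one a (.leaf b))
  | leaf2 (a b c : α) : Extends (.leaf a) (.two a (.leaf b) (.leaf c))
  | one {t t' : MTree α} (a : α) : Extends t t' → Extends (.one a t) (.one a t')
  | two {l l' r r' : MTree α} (a : α) :
      Extends l l' → Extends r r' → Extends (.two a l r) (.two a l' r')

/-- All leaves at depth exactly `n`. -/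
inductive PerfectH : MTree α → ℕ → Prop
  | leaf (a : α) : PerfectH (.leaf a) 0
  | one {t : MTree α} (a : α) {n : ℕ} : PerfectH t n → PerfectH (.one a t) (n + 1)
  | two {l r : MTree α} (a : α) {n : ℕ} :
      PerfectH l n → PerfectH r n → PerfectH (.two a l r) (n + 1)

theorem extends_total (τ : MTree α) : ∃ ext, Extends τ ext := by
  induction τ with
  | leaf a => exact ⟨_, .leaf1 a a⟩
  | one a t ih => obtain ⟨e, he⟩ := ih; exact ⟨_, .one a he⟩
  | two a l r ihl ihr =>
      obtain ⟨el, hel⟩ := ihl; obtain ⟨er, her⟩ := ihr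
      exact ⟨_, .two a hel her⟩

theorem perfectH_extends {τ ext : MTree α} {n : ℕ} (hp : PerfectH τ n)
    (he : Extends τ ext) : PerfectH ext (n + 1) := by
  induction he generalizing n with
  | leaf1 a b => cases hp; exact .one a (.leaf b)
  | leaf2 a b c => cases hp; exact .two a (.leaf b) (.leaf c)
  | one a h ih => cases hp with | one _ hp' => exact .one a (ih hp')
  | two a hl hr ihl ihr =>
      cases hp with | two _ hpl hpr => exact .two a (ihl hpl) (ihr hpr)

theorem perfectH_height {τ : MTree α} {n : ℕ} (hp : PerfectH τ n) : τ.height = n := by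
  induction hp with
  | leaf => rfl
  | one a _ ih => simp [height, ih]
  | two a _ _ ihl ihr => simp [height, ihl, ihr]

theorem perfectH_child {τ τ'' : MTree α} {n : ℕ} (hp : PerfectH τ (n + 1))
    (hm : τ'' ∈ τ.rootChildren) : PerfectH τ'' n := by
  cases hp with
  | one a hp' => simp [rootChildren] at hm; subst hm; exact hp'
  | two a hpl hpr =>
      simp [rootChildren] at hm
      rcases hm with rfl | rfl
      · exact hpl
      · exact hpr

end MTree

/-- Progress: `step` is total (every monitoring tree can be extended) and, starting from
an initial single-node run, after the first `k` invocations each invocation of `step`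
appends exactly one element to the history sequence (makes exactly one transaction
permanent). -/
theorem stmt8 {α : Type} [Inhabited α] (k : ℕ) (hk : 0 < k)
    (R : ℕ → List α × MTree α) (c₀ : α)
    (h0 : R 0 = ([c₀], .leaf c₀))
    (hstep : ∀ l, ∃ ext : MTree α, MTree.Extends ((R l).2) ext ∧
      (ext.height ≤ k → R (l + 1) = ((R l).1, ext)) ∧
      (k < ext.height → ∃ τ'' ∈ ext.rootChildren,
        R (l + 1) = ((R l).1 ++ [(R l).2.rootLabel], τ''))) :
    (∀ τ : MTree α, ∃ ext, MTree.Extends τ ext) ∧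
    (∀ l, k ≤ l → (R (l + 1)).1.length = (R l).1.length + 1) := by
  have inv : ∀ l, MTree.PerfectH (R l).2 (min l k) := by
    intro l
    induction l with
    | zero => rw [h0]; simpa using MTree.PerfectH.leaf c₀
    | succ l ih =>
        obtain ⟨ext, hext, hle, hgt⟩ := hstep l
        have hpext : MTree.PerfectH ext (min l k + 1) := MTree.perfectH_extends ih hext
        have hh : ext.height = min l k + 1 := MTree.perfectH_height hpext
        rcases le_or_gt (l + 1) k with h | h
        · have : min l k = l := min_eq_left (Nat.le_of_succ_le h)
          rw [hle (by rw [hh, this]; exact h)]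
          simpa [min_eq_left (Nat.le_of_succ_le h), min_eq_left h, this] using hpext
        · have hlk : min l k = k := min_eq_right (Nat.lt_succ_iff.mp h)
          obtain ⟨τ'', hmem, hR⟩ := hgt (by rw [hh, hlk]; omega)
          rw [hR]
          have := MTree.perfectH_child hpext hmem
          rw [hlk] at this
          simpa [min_eq_right h.le] using this
  refine ⟨MTree.extends_total, fun l hl => ?_⟩
  obtain ⟨ext, hext, hle, hgt⟩ := hstep l
  have hp := inv l
  rw [min_eq_right hl] at hp
  have hh : ext.height = k + 1 := MTree.perfectH_height (MTree.perfectH_extends hp hext)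
  obtain ⟨τ'', hmem, hR⟩ := hgt (by omega)
  rw [hR]
  simp
end

section
/- For the iterated step function on blockchain runs starting from an initial single-node run, after l ≥ k steps the history has length l - k + 1 and the monitoring tree has height exactly k. -/
namespace MTree

inductive Perf {α : Type} : MTree α → ℕ → Prop
  | leaf (a : α) : Perf (.leaf a) 0
  | one (a : α) {t : MTree α} {n : ℕ} : Perf t n → Perf (.one a t) (n+1)
  | two (a : α) {l r : MTree α} {n : ℕ} :
      Perf l n → Perf r n → Perf (.two a l r) (n+1)

lemma Perf.height_eq {α : Type} {t : MTree α} {n : ℕ} (h : Perf t n) :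
    t.height = n := by
  induction h with
  | leaf => rfl
  | one a _ ih => simp [height, ih]
  | two a _ _ ih1 ih2 => simp [height, ih1, ih2]

lemma Perf.ext {α : Type} {t t' : MTree α} {n : ℕ} (h : Perf t n)
    (he : Extends t t') : Perf t' (n+1) := by
  induction he generalizing n with
  | leaf1 a b => cases h; exact .one a (.leaf b)
  | leaf2 a b c => cases h; exact .two a (.leaf b) (.leaf c)
  | one a _ ih => cases h with | one _ hp => exact .one a (ih hp)
  | two a _ _ ih1 ih2 => cases h with | two _ hl hr => exact .two a (ih1 hl) (ih2 hr)

lemma Perf.child {α : Type} {t t' : MTree α} {n : ℕ} (h : Perf t (n+1))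
    (hc : t' ∈ t.rootChildren) : Perf t' n := by
  cases h with
  | one a hp => simp [rootChildren] at hc; subst hc; exact hp
  | two a hl hr =>
    simp [rootChildren] at hc
    rcases hc with rfl | rfl
    · exact hl
    · exact hr

end MTree


/-- For the iterated step function on blockchain runs starting from an initial
single-node run, after `l ≥ k` steps the history has length `l - k + 1` and the
monitoring tree has height exactly `k`. -/
theorem stmt15 {α : Type} (k : ℕ) (hk : 0 < k)
    (R : ℕ → List α × MTree α) (c₀ : α)
    (h0 : R 0 = ([c₀], .leaf c₀))
    (hstep : ∀ l, ∃ ext : MTree α, MTree.Extends ((R l).2) ext ∧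
      (ext.height ≤ k → R (l + 1) = ((R l).1, ext)) ∧
      (k < ext.height → ∃ τ'' ∈ ext.rootChildren,
        R (l + 1) = ((R l).1 ++ [(R l).2.rootLabel], τ''))) :
    ∀ l, k ≤ l → (R l).1.length = l - k + 1 ∧ (R l).2.height = k := by
  have key : ∀ l, (R l).1.length = l - k + 1 ∧ MTree.Perf (R l).2 (min l k) := by
    intro l
    induction l with
    | zero => rw [h0]; exact ⟨by simp, by simpa using MTree.Perf.leaf c₀⟩
    | succ l ih =>
      obtain ⟨hlen, hperf⟩ := ih
      obtain ⟨ext, hext, hle, hgt⟩ := hstep l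
      have hpe : MTree.Perf ext (min l k + 1) := hperf.ext hext
      have hh : ext.height = min l k + 1 := hpe.height_eq
      by_cases hcase : l < k
      · have h1 : ext.height ≤ k := by omega
        rw [hle h1]
        constructor
        · simpa using by omega
        · simpa [show min (l+1) k = min l k + 1 by omega] using hpe
      · have h2 : k < ext.height := by omega
        obtain ⟨τ'', hmem, heq⟩ := hgt h2
        rw [heq]
        constructor
        · simp [hlen]; omega
        · have : min l k + 1 = k + 1 := by omega
          rw [this] at hpe
          simpa [show min (l+1) k = k by omega] using hpe.child hmem
  intro l hl
  obtain ⟨h1, h2⟩ := key l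
  exact ⟨h1, by rw [h2.height_eq]; omega⟩
end

section
/- In a monitoring tree built from a set S ⊆ {0,…,k-1} of branching levels, the total number of nodes equals 1 + Σ_{d=1}^{k} 2^{|S ∩ {0,…,d-1}|}, and this sum over all S with |S| = m is maximized when S = {0,…,m-1}. -/
/-- Number of nodes of the rooted tree built from the set `S ⊆ {0,…,k-1}` of branching
levels: the number of nodes at depth `d` is `2^|S ∩ {0,…,d-1}|`. -/
def nodes (k : ℕ) (S : Finset ℕ) : ℕ :=
  ∑ d ∈ Finset.range (k + 1), 2 ^ ((S ∩ Finset.range d).card)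

/-- The total number of nodes equals `1 + Σ_{d=1}^{k} 2^{|S ∩ {0,…,d-1}|}`, and over all
`S` with `|S| = m` this is maximized when `S = {0,…,m-1}`. -/
theorem stmt19 (k m : ℕ) (S : Finset ℕ) (hS : S ⊆ Finset.range k) (hm : S.card = m) :
    nodes k S = 1 + ∑ d ∈ Finset.Icc 1 k, 2 ^ ((S ∩ Finset.range d).card) ∧
    nodes k S ≤ nodes k (Finset.range m) := by
  constructor
  · rw [nodes, show Finset.range (k+1) = insert 0 (Finset.Icc 1 k) by
      ext x; simp [Nat.lt_succ_iff]; omega]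
    rw [Finset.sum_insert (by simp)]
    simp
  · unfold nodes
    apply Finset.sum_le_sum
    intro d _
    apply Nat.pow_le_pow_right (by norm_num)
    have h1 : (S ∩ Finset.range d).card ≤ m := hm ▸ Finset.card_le_card Finset.inter_subset_left
    have h2 : (S ∩ Finset.range d).card ≤ d := by
      simpa using Finset.card_le_card
        (Finset.inter_subset_right (s₁ := S) (s₂ := Finset.range d))
    rw [show Finset.range m ∩ Finset.range d = Finset.range (min m d) by
      ext x; simp [Nat.lt_min], Finset.card_range]
    omega
end
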